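/- The norm of ℓ¹ (the space of absolutely summable real sequences) is extremely rough: for every u ∈ S_{ℓ¹}, limsup_{‖h‖→0} (‖u+h‖₁ + ‖u−h‖₁ − 2)/‖h‖₁ = 2. In particular, the norm of ℓ¹ is not Fréchet differentiable at any point. -/

import Mathlib

/-!
By the triangle inequality the roughness quotient never exceeds `2`. In `ℓ¹` it comes
arbitrarily close to `2` along `h = t • eᵢ` with `|uᵢ|` negligible compared with `t`, which
exists because `uᵢ → 0`: only the `i`-th coordinate changes, and
`|uᵢ + t| + |uᵢ - t| - 2|uᵢ| ≥ 2t - 2|uᵢ|`. Differentiability of the norm at `u` would instead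
force the quotient to tend to `0`.
-/

open Filter Metric

/-- The roughness `η(X, u)` of the norm of `X` at `u`:
`limsup_{‖h‖ → 0} (‖u + h‖ + ‖u - h‖ - 2) / ‖h‖`. -/
noncomputable def roughness {X : Type*} [NormedAddCommGroup X] (u : X) : ℝ :=
  Filter.limsup (fun h : X => (‖u + h‖ + ‖u - h‖ - 2) / ‖h‖) (nhdsWithin 0 {(0 : X)}ᶜ)

open Topology

section Roughness

variable {X : Type*} [NormedAddCommGroup X] {u : X}

lemma roughness_quotient_le_two (hu : ‖u‖ = 1) {h : X} (hh : h ≠ 0) :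
    (‖u + h‖ + ‖u - h‖ - 2) / ‖h‖ ≤ 2 := by
  rw [div_le_iff₀ (norm_pos_iff.mpr hh)]
  linarith [norm_add_le u h, norm_sub_le u h]

lemma roughness_eq_two_of_frequently (hu : ‖u‖ = 1)
    (hfreq : ∀ ε > 0, ∃ᶠ h in 𝓝[≠] 0, 2 - ε ≤ (‖u + h‖ + ‖u - h‖ - 2) / ‖h‖) :
    roughness u = 2 := by
  have hle : ∀ᶠ h in 𝓝[≠] 0, (‖u + h‖ + ‖u - h‖ - 2) / ‖h‖ ≤ 2 :=
    eventually_mem_nhdsWithin.mono fun h hh => roughness_quotient_le_two hu hh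
  refine le_antisymm (limsup_le_of_le (IsCoboundedUnder.of_frequently_ge (hfreq 1 one_pos)) hle) ?_
  exact le_of_forall_sub_le fun ε hε =>
    le_limsup_of_frequently_le (hfreq ε hε) (isBoundedUnder_of_eventually_le hle)

lemma roughness_eq_zero_of_differentiableAt [NormedSpace ℝ X] [Nontrivial X] (hu : ‖u‖ = 1)
    (hd : DifferentiableAt ℝ (‖·‖) u) : roughness u = 0 := by
  have := Module.punctured_nhds_neBot ℝ X 0
  set f := fderiv ℝ (‖·‖) u
  have hplus : (fun h : X => ‖u + h‖ - ‖u‖ - f h) =o[𝓝 0] (‖·‖) :=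
    Asymptotics.isLittleO_norm_right.mpr (hasFDerivAt_iff_isLittleO_nhds_zero.mp hd.hasFDerivAt)
  have hminus : (fun h : X => ‖u - h‖ - ‖u‖ - f (-h)) =o[𝓝 0] (‖·‖) := by
    simpa [Function.comp_def, ← sub_eq_add_neg] using
      hplus.comp_tendsto (continuous_neg.tendsto' (0 : X) 0 neg_zero)
  have hsum : (fun h : X => ‖u + h‖ + ‖u - h‖ - 2) =o[𝓝 0] (‖·‖) :=
    (hplus.add hminus).congr_left fun h => by simp only [hu, map_neg]; ring
  exact (hsum.tendsto_div_nhds_zero.mono_left nhdsWithin_le_nhds).limsup_eq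

end Roughness

section EllOne

variable {ι : Type*}

lemma lp.norm_one_eq_tsum_abs (f : lp (fun _ : ι => ℝ) 1) : ‖f‖ = ∑' i, |f i| := by
  rw [lp.norm_eq_tsum_rpow (by norm_num)]
  simp [Real.norm_eq_abs]

lemma lp.summable_abs_one (f : lp (fun _ : ι => ℝ) 1) : Summable fun i => |f i| := by
  simpa [Real.norm_eq_abs] using (lp.memℓp f).summable (by norm_num)

lemma lp.norm_add_single_one [DecidableEq ι] (u : lp (fun _ : ι => ℝ) 1) (i : ι) (t : ℝ) :
    ‖u + lp.single 1 i t‖ = ‖u‖ + (|u i + t| - |u i|) := by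
  rw [lp.norm_one_eq_tsum_abs, lp.norm_one_eq_tsum_abs, ← sub_eq_iff_eq_add',
    ← (lp.summable_abs_one _).tsum_sub (lp.summable_abs_one u)]
  rw [← tsum_ite_eq i (fun j => |u j + t| - |u j|)]
  refine tsum_congr fun j => ?_
  rcases eq_or_ne j i with rfl | hj <;> simp [*]

lemma lp.norm_sub_single_one [DecidableEq ι] (u : lp (fun _ : ι => ℝ) 1) (i : ι) (t : ℝ) :
    ‖u - lp.single 1 i t‖ = ‖u‖ + (|u i - t| - |u i|) := by
  rw [sub_eq_add_neg, ← lp.single_neg, lp.norm_add_single_one, ← sub_eq_add_neg]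

lemma lp.frequently_roughness_quotient_ge [Infinite ι] {u : lp (fun _ : ι => ℝ) 1}
    (hu : ‖u‖ = 1) {ε : ℝ} (hε : 0 < ε) :
    ∃ᶠ h in 𝓝[≠] 0, 2 - ε ≤ (‖u + h‖ + ‖u - h‖ - 2) / ‖h‖ := by
  classical
  refine frequently_iff.mpr fun hU => ?_
  obtain ⟨δ, hδ, hball⟩ := mem_nhdsWithin_iff.mp hU
  set t := δ / 2
  have ht : 0 < t := half_pos hδ
  obtain ⟨i, hi⟩ : ∃ i, |u i| < ε * t / 2 :=
    ((lp.summable_abs_one u).tendsto_cofinite_zero.eventually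
      (gt_mem_nhds (by positivity))).exists
  have hnorm : ‖lp.single (E := fun _ : ι => ℝ) 1 i t‖ = t := by
    rw [lp.norm_single (by norm_num), Real.norm_of_nonneg ht.le]
  refine ⟨lp.single 1 i t, hball ⟨?_, ?_⟩, ?_⟩
  · rw [mem_ball_zero_iff, hnorm]
    exact half_lt_self hδ
  · rw [Set.mem_compl_singleton_iff, ← norm_ne_zero_iff, hnorm]
    exact ht.ne'
  · rw [lp.norm_add_single_one, lp.norm_sub_single_one, hnorm, hu, le_div_iff₀ ht]
    linarith [le_abs_self (u i + t), neg_le_abs (u i - t)]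

lemma lp.roughness_one_eq_two [Infinite ι] {u : lp (fun _ : ι => ℝ) 1} (hu : ‖u‖ = 1) :
    roughness u = 2 :=
  roughness_eq_two_of_frequently hu fun _ hε => lp.frequently_roughness_quotient_ge hu hε

end EllOne

/-- The norm of `ℓ¹` is extremely rough; in particular it is nowhere Fréchet
differentiable on the unit sphere. -/
theorem stmt18 (u : lp (fun _ : ℕ => ℝ) 1) (hu : ‖u‖ = 1) :
    roughness u = 2 ∧ ¬ DifferentiableAt ℝ (fun x : lp (fun _ : ℕ => ℝ) 1 => ‖x‖) u := by
  have hrough := lp.roughness_one_eq_two hu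
  refine ⟨hrough, fun hd => ?_⟩
  have : Nontrivial (lp (fun _ : ℕ => ℝ) 1) :=
    nontrivial_of_ne u 0 (ne_zero_of_norm_ne_zero (by simp [hu]))
  have hsmooth := roughness_eq_zero_of_differentiableAt hu hd
  linarith
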